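/- arXiv:2510.26257 — 8 statements merged into one kernel-verified Lean document; each statement's English description precedes it below -/
import Mathlib

section
/- If α ≥ α* and x_α is a maximizer of x ↦ -f₁(x) + α·f₂(x) over F, then f₁(x_α)/f₂(x_α) ≥ α* and α - g(α)/f₂(x_α) = f₁(x_α)/f₂(x_α) ≤ α. That is, the Dinkelbach update stays within [α*, α]. -/
/-! The minimiser `x₀` of the ratio `f₁ / f₂` satisfies `-f₁ x₀ + α f₂ x₀ = f₂ x₀ (α - α*) ≥ 0`,
so `g α ≥ 0`. Dividing `g α = -f₁ xα + α f₂ xα` by `f₂ xα > 0` gives both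
`α - g α / f₂ xα = f₁ xα / f₂ xα` and `f₁ xα / f₂ xα ≤ α`. -/

lemma sub_neg_add_mul_div {a b : ℝ} (t : ℝ) (hb : b ≠ 0) : t - (-a + t * b) / b = a / b := by
  field_simp
  ring

lemma div_le_iff_nonneg_neg_add_mul {a b t : ℝ} (hb : 0 < b) : a / b ≤ t ↔ 0 ≤ -a + t * b := by
  rw [div_le_iff₀ hb]
  constructor <;> intro h <;> linarith

lemma exists_nonneg_neg_add_mul_of_isLeast_div {X : Type*} {F : Set X} {f₁ f₂ : X → ℝ}
    (hf₂pos : ∀ x ∈ F, 0 < f₂ x) {αstar α : ℝ}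
    (hmin : IsLeast ((fun x => f₁ x / f₂ x) '' F) αstar) (hα : αstar ≤ α) :
    ∃ x ∈ F, 0 ≤ -f₁ x + α * f₂ x := by
  obtain ⟨x₀, hx₀, hx₀min⟩ := hmin.1
  exact ⟨x₀, hx₀, (div_le_iff_nonneg_neg_add_mul (hf₂pos x₀ hx₀)).1 (hx₀min.le.trans hα)⟩

theorem stmt_4_general {n : ℕ} (F : Set (Fin n → ℝ))
    (f₁ f₂ : (Fin n → ℝ) → ℝ)
    (hf₂pos : ∀ x ∈ F, 0 < f₂ x)
    (g : ℝ → ℝ)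
    (hg : ∀ t : ℝ, IsGreatest ((fun x => -f₁ x + t * f₂ x) '' F) (g t))
    (αstar : ℝ)
    (hmin : IsLeast ((fun x => f₁ x / f₂ x) '' F) αstar)
    (α : ℝ) (hα : αstar ≤ α)
    (xα : Fin n → ℝ) (hxα : xα ∈ F)
    (hgα : g α = -f₁ xα + α * f₂ xα) :
    αstar ≤ f₁ xα / f₂ xα ∧
    α - g α / f₂ xα = f₁ xα / f₂ xα ∧
    f₁ xα / f₂ xα ≤ α := by
  have hpos := hf₂pos xα hxα
  obtain ⟨x₀, hx₀, hnonneg⟩ := exists_nonneg_neg_add_mul_of_isLeast_div hf₂pos hmin hα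
  have hg_nonneg : 0 ≤ g α := hnonneg.trans ((hg α).2 ⟨x₀, hx₀, rfl⟩)
  refine ⟨hmin.2 ⟨xα, hxα, rfl⟩, ?_, ?_⟩
  · rw [hgα, sub_neg_add_mul_div α hpos.ne']
  · rw [div_le_iff_nonneg_neg_add_mul hpos, ← hgα]
    exact hg_nonneg

/-- If α ≥ α* and x_α maximizes x ↦ -f₁ x + α·f₂ x over F, then
f₁(x_α)/f₂(x_α) ≥ α* and α - g(α)/f₂(x_α) = f₁(x_α)/f₂(x_α) ≤ α:
the Dinkelbach update stays within [α*, α]. -/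
theorem stmt_4 {n : ℕ} (F : Set (Fin n → ℝ)) (hFne : F.Nonempty) (hFc : IsCompact F)
    (f₁ f₂ : (Fin n → ℝ) → ℝ) (hf₁ : ContinuousOn f₁ F) (hf₂ : ContinuousOn f₂ F)
    (hf₂pos : ∀ x ∈ F, 0 < f₂ x)
    (g : ℝ → ℝ)
    (hg : ∀ t : ℝ, IsGreatest ((fun x => -f₁ x + t * f₂ x) '' F) (g t))
    (αstar : ℝ)
    (hmin : IsLeast ((fun x => f₁ x / f₂ x) '' F) αstar)
    (α : ℝ) (hα : αstar ≤ α)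
    (xα : Fin n → ℝ) (hxα : xα ∈ F)
    (hgα : g α = -f₁ xα + α * f₂ xα) :
    αstar ≤ f₁ xα / f₂ xα ∧
    α - g α / f₂ xα = f₁ xα / f₂ xα ∧
    f₁ xα / f₂ xα ≤ α :=
  stmt_4_general F f₁ f₂ hf₂pos g hg αstar hmin α hα xα hxα hgα
end

section
/- Suppose γ₀ ≤ α* ≤ α₀ and the sequences are generated by γ_{k+1} = γ_k - g(γ_k)·(α_k - γ_k)/(g(α_k) - g(γ_k)) and α_{k+1} = min(α_k - g(α_k)/f₂(x_k^α), γ_{k+1} - g(γ_{k+1})/f₂(x_{k+1}^γ)), where x_t is a maximizer for parameter t. Then for all k, γ_k ≤ γ_{k+1} ≤ α* ≤ α_{k+1} ≤ α_k. -/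
/-!
On `F` the function `g` is a pointwise maximum of affine functions of `t` with positive
slopes `f₂ x`, so it is strictly increasing, and the affine piece active at `α*` is a
line through `(α*, 0)` lying below `g`. The first fact puts the bracket `γ_k ≤ α* ≤ α_k`
in the form `g (γ_k) ≤ 0 ≤ g (α_k)`, after which the secant step moves `γ_k` to the right;
the supporting line keeps the secant root left of `α*`. For a maximizer `x` at `t`, the
Dinkelbach step `t - g t / f₂ x` equals the ratio `f₁ x / f₂ x`, which `g α* = 0` bounds
below by `α*`, and `g (α_k) ≥ 0` makes it at most `α_k`. Induction on `k` finishes.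
-/

/-- The root of the secant of `g` through `(s, g s)` and `(t, g t)`. -/
noncomputable def secantStep (g : ℝ → ℝ) (s t : ℝ) : ℝ :=
  s - g s * (t - s) / (g t - g s)

theorem le_secantStep {g : ℝ → ℝ} {s t : ℝ} (hst : s ≤ t) (hs : g s ≤ 0)
    (hlt : g s < g t) : s ≤ secantStep g s t := by
  have : g s * (t - s) / (g t - g s) ≤ 0 :=
    div_nonpos_of_nonpos_of_nonneg (mul_nonpos_of_nonpos_of_nonneg hs (by linarith))
      (by linarith)
  unfold secantStep
  linarith

theorem secantStep_le {g : ℝ → ℝ} {c r s t : ℝ} (hsupp : ∀ u, c * (u - r) ≤ g u)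
    (hsr : s ≤ r) (hrt : r ≤ t) (hlt : g s < g t) : secantStep g s t ≤ r := by
  have hs := hsupp s
  have ht := hsupp t
  have key : 0 ≤ (r - s) * g t + (t - r) * g s := by nlinarith
  unfold secantStep
  rw [sub_le_comm, le_div_iff₀ (by linarith)]
  nlinarith

section MaxOfAffine

variable {E : Type*} {F : Set E} {f₁ f₂ : E → ℝ} {g : ℝ → ℝ}

theorem le_of_isGreatest_affine
    (hg : ∀ t : ℝ, IsGreatest ((fun x => -f₁ x + t * f₂ x) '' F) (g t))
    {x : E} (hx : x ∈ F) (t : ℝ) : -f₁ x + t * f₂ x ≤ g t :=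
  (hg t).2 ⟨x, hx, rfl⟩

theorem strictMono_of_isGreatest_affine (hf₂pos : ∀ x ∈ F, 0 < f₂ x)
    (hg : ∀ t : ℝ, IsGreatest ((fun x => -f₁ x + t * f₂ x) '' F) (g t)) : StrictMono g := by
  intro s t hst
  obtain ⟨x, hx, hxs⟩ := (hg s).1
  have hlt : -f₁ x + s * f₂ x < -f₁ x + t * f₂ x := by
    have := hf₂pos x hx
    gcongr
  exact hxs ▸ hlt.trans_le (le_of_isGreatest_affine hg hx t)

theorem exists_supporting_line_of_isGreatest_affine
    (hg : ∀ t : ℝ, IsGreatest ((fun x => -f₁ x + t * f₂ x) '' F) (g t)) (r : ℝ) :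
    ∃ c, ∀ t, c * (t - r) + g r ≤ g t := by
  obtain ⟨x, hx, hxr⟩ := (hg r).1
  refine ⟨f₂ x, fun t => ?_⟩
  have := le_of_isGreatest_affine hg hx t
  simp only at hxr
  linarith

theorem le_sub_div_of_isGreatest_affine (hf₂pos : ∀ x ∈ F, 0 < f₂ x)
    (hg : ∀ t : ℝ, IsGreatest ((fun x => -f₁ x + t * f₂ x) '' F) (g t))
    {r : ℝ} (hr : g r = 0) {x : E} (hx : x ∈ F) {t : ℝ} (hgt : g t = -f₁ x + t * f₂ x) :
    r ≤ t - g t / f₂ x := by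
  have hpos := hf₂pos x hx
  have hratio : t - g t / f₂ x = f₁ x / f₂ x := by
    rw [hgt]
    field_simp
    ring
  rw [hratio, le_div_iff₀ hpos]
  linarith [le_of_isGreatest_affine hg hx r]

end MaxOfAffine

theorem stmt_5_general {n : ℕ} (F : Set (Fin n → ℝ))
    (f₁ f₂ : (Fin n → ℝ) → ℝ)
    (hf₂pos : ∀ x ∈ F, 0 < f₂ x)
    (g : ℝ → ℝ)
    (hg : ∀ t : ℝ, IsGreatest ((fun x => -f₁ x + t * f₂ x) '' F) (g t))
    (αstar : ℝ)
    (hroot : g αstar = 0)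
    (γ a : ℕ → ℝ)
    (xγ xa : ℕ → (Fin n → ℝ))
    (hxγ : ∀ k, xγ k ∈ F ∧ g (γ k) = -f₁ (xγ k) + γ k * f₂ (xγ k))
    (hxa : ∀ k, xa k ∈ F ∧ g (a k) = -f₁ (xa k) + a k * f₂ (xa k))
    (hbracket0 : γ 0 ≤ αstar ∧ αstar ≤ a 0)
    (hne : ∀ k, γ k ≠ a k)
    (hγrec : ∀ k, γ (k + 1) = γ k - g (γ k) * (a k - γ k) / (g (a k) - g (γ k)))
    (harec : ∀ k, a (k + 1) =
      min (a k - g (a k) / f₂ (xa k)) (γ (k + 1) - g (γ (k + 1)) / f₂ (xγ (k + 1)))) :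
    ∀ k, γ k ≤ γ (k + 1) ∧ γ (k + 1) ≤ αstar ∧ αstar ≤ a (k + 1) ∧ a (k + 1) ≤ a k := by
  have hmono := strictMono_of_isGreatest_affine hf₂pos hg
  obtain ⟨c, hsupp⟩ := exists_supporting_line_of_isGreatest_affine hg αstar
  simp only [hroot, add_zero] at hsupp
  have step : ∀ k, γ k ≤ αstar → αstar ≤ a k →
      γ k ≤ γ (k + 1) ∧ γ (k + 1) ≤ αstar ∧ αstar ≤ a (k + 1) ∧ a (k + 1) ≤ a k := by
    intro k hγk hak
    have hlt : γ k < a k := (hγk.trans hak).lt_of_ne (hne k)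
    have hgγ : g (γ k) ≤ 0 := hroot ▸ hmono.monotone hγk
    have hga : 0 ≤ g (a k) := hroot ▸ hmono.monotone hak
    have hγsucc : γ (k + 1) = secantStep g (γ k) (a k) := hγrec k
    rw [harec k, hγsucc]
    refine ⟨le_secantStep hlt.le hgγ (hmono hlt), secantStep_le hsupp hγk hak (hmono hlt),
      le_min (le_sub_div_of_isGreatest_affine hf₂pos hg hroot (hxa k).1 (hxa k).2)
        (hγsucc ▸ le_sub_div_of_isGreatest_affine hf₂pos hg hroot (hxγ (k + 1)).1
          (hxγ (k + 1)).2),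
      (min_le_left _ _).trans (sub_le_self _ (div_nonneg hga (hf₂pos _ (hxa k).1).le))⟩
  have bracket : ∀ k, γ k ≤ αstar ∧ αstar ≤ a k := by
    intro k
    induction k with
    | zero => exact hbracket0
    | succ k ih => exact ⟨(step k ih.1 ih.2).2.1, (step k ih.1 ih.2).2.2.1⟩
  exact fun k => step k (bracket k).1 (bracket k).2

/-- Monotonicity and bracketing of the accelerated interval Dinkelbach
iterates: γ_k ≤ γ_{k+1} ≤ α* ≤ α_{k+1} ≤ α_k for all k. -/
theorem stmt_5 {n : ℕ} (F : Set (Fin n → ℝ)) (hFne : F.Nonempty) (hFc : IsCompact F)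
    (f₁ f₂ : (Fin n → ℝ) → ℝ) (hf₁ : ContinuousOn f₁ F) (hf₂ : ContinuousOn f₂ F)
    (hf₂pos : ∀ x ∈ F, 0 < f₂ x)
    (g : ℝ → ℝ)
    (hg : ∀ t : ℝ, IsGreatest ((fun x => -f₁ x + t * f₂ x) '' F) (g t))
    (αstar : ℝ)
    (hmin : IsLeast ((fun x => f₁ x / f₂ x) '' F) αstar)
    (hroot : g αstar = 0)
    (γ a : ℕ → ℝ)
    (xγ xa : ℕ → (Fin n → ℝ))
    (hxγ : ∀ k, xγ k ∈ F ∧ g (γ k) = -f₁ (xγ k) + γ k * f₂ (xγ k))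
    (hxa : ∀ k, xa k ∈ F ∧ g (a k) = -f₁ (xa k) + a k * f₂ (xa k))
    (hinit : g (γ 0) ≤ 0 ∧ 0 ≤ g (a 0))
    (hbracket0 : γ 0 ≤ αstar ∧ αstar ≤ a 0)
    (hne : ∀ k, γ k ≠ a k)
    (hγrec : ∀ k, γ (k + 1) = γ k - g (γ k) * (a k - γ k) / (g (a k) - g (γ k)))
    (harec : ∀ k, a (k + 1) =
      min (a k - g (a k) / f₂ (xa k)) (γ (k + 1) - g (γ (k + 1)) / f₂ (xγ (k + 1)))) :
    ∀ k, γ k ≤ γ (k + 1) ∧ γ (k + 1) ≤ αstar ∧ αstar ≤ a (k + 1) ∧ a (k + 1) ≤ a k :=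
  stmt_5_general F f₁ f₂ hf₂pos g hg αstar hroot γ a xγ xa hxγ hxa hbracket0 hne hγrec harec
end

section
/- Under the interval iteration with γ₀ ≤ α* ≤ α₀, the monotone bounded sequences γ_k (increasing) and α_k (decreasing, via the accelerated interval update) both converge to α*, the unique root of g. -/
/-!
`g` is convex as a pointwise maximum of affine functions of `t`, and a maximiser `x` at `t` gives
a supporting line of `g` at `t` with slope `f₂ x > 0`. Convexity keeps the secant iterate at or
below the root, and a Newton step along a supporting line overshoots it, so the bracket
`g γ_k ≤ 0 ≤ g α_k` persists and both sequences are monotone and bounded by `α*`. Their limits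
are `α*`: as long as `γ_k` stays below some `L < α*` the secant step is bounded below by a
positive constant, and as long as `α_k` stays above some `L > α*` so is the Newton step, because
the supporting slopes at `α_k` are at most `g (α₀ + 1)`.
-/

open Filter Set Topology

lemma tendsto_of_monotone_of_le_of_step {u : ℕ → ℝ} {c : ℝ} (hu : Monotone u)
    (huc : ∀ k, u k ≤ c) (hstep : ∀ L < c, ∃ δ > 0, ∀ k, u k ≤ L → u k + δ ≤ u (k + 1)) :
    Tendsto u atTop (𝓝 c) := by
  have hbdd : BddAbove (range u) := ⟨c, by rintro _ ⟨k, rfl⟩; exact huc k⟩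
  suffices hsup : ⨆ k, u k = c from hsup ▸ tendsto_atTop_ciSup hu hbdd
  refine le_antisymm (ciSup_le huc) (not_lt.mp fun hlt => ?_)
  obtain ⟨δ, hδ, hδstep⟩ := hstep _ hlt
  have hlin : ∀ k : ℕ, u 0 + k * δ ≤ u k := by
    intro k
    induction k with
    | zero => simp
    | succ k ih =>
      push_cast
      linarith [hδstep k (le_ciSup hbdd k)]
  obtain ⟨k, hk⟩ := exists_nat_gt ((c - u 0) / δ)
  have := (div_lt_iff₀ hδ).mp hk
  linarith [hlin k, huc k]

lemma tendsto_of_antitone_of_le_of_step {u : ℕ → ℝ} {c : ℝ} (hu : Antitone u)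
    (huc : ∀ k, c ≤ u k) (hstep : ∀ L > c, ∃ δ > 0, ∀ k, L ≤ u k → u (k + 1) + δ ≤ u k) :
    Tendsto u atTop (𝓝 c) := by
  have hneg : Tendsto (-u) atTop (𝓝 (-c)) := by
    refine tendsto_of_monotone_of_le_of_step (fun i j hij => neg_le_neg (hu hij))
      (fun k => neg_le_neg (huc k)) fun L hL => ?_
    obtain ⟨δ, hδ, hδstep⟩ := hstep (-L) (by linarith)
    refine ⟨δ, hδ, fun k hk => ?_⟩
    have := hδstep k (by simp only [Pi.neg_apply] at hk; linarith)
    simp only [Pi.neg_apply]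
    linarith
  simpa using hneg.neg

lemma ConvexOn.map_secant_root_nonpos {g : ℝ → ℝ} (hg : ConvexOn ℝ univ g) {s u : ℝ}
    (hs : g s ≤ 0) (hu : 0 ≤ g u) (hsu : g s ≠ g u) :
    g (s - g s * (u - s) / (g u - g s)) ≤ 0 := by
  have hD : 0 < g u - g s := sub_pos.mpr (lt_of_le_of_ne (hs.trans hu) hsu)
  have hconv := hg.2 (mem_univ s) (mem_univ u) (div_nonneg hu hD.le)
    (div_nonneg (neg_nonneg.mpr hs) hD.le) (by field_simp; ring)
  have hpt : g u / (g u - g s) * s + -g s / (g u - g s) * u = s - g s * (u - s) / (g u - g s) := by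
    field_simp; ring
  have hval : g u / (g u - g s) * g s + -g s / (g u - g s) * g u = 0 := by
    field_simp; ring
  simp only [smul_eq_mul] at hconv
  rwa [hpt, hval] at hconv

lemma le_sub_div_of_supporting {g : ℝ → ℝ} {t m r : ℝ} (hsupp : ∀ s, g t + m * (s - t) ≤ g s)
    (hm : 0 < m) (hr : g r = 0) : r ≤ t - g t / m := by
  have h := hsupp r
  rw [hr] at h
  have : g t / m ≤ t - r := (div_le_iff₀ hm).mpr (by linarith)
  linarith

section MaxOfAffine

variable {E : Type*} {F : Set E} {f₁ f₂ : E → ℝ} {g : ℝ → ℝ}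

lemma convexOn_of_isGreatest (hg : ∀ t, IsGreatest ((fun x => -f₁ x + t * f₂ x) '' F) (g t)) :
    ConvexOn ℝ univ g := by
  refine ⟨convex_univ, fun s _ u _ p q hp hq hpq => ?_⟩
  obtain ⟨x, hx, hgx⟩ := (hg (p • s + q • u)).1
  have hs := (hg s).2 ⟨x, hx, rfl⟩
  have hu := (hg u).2 ⟨x, hx, rfl⟩
  simp only [smul_eq_mul] at hgx ⊢
  rw [← hgx]
  calc -f₁ x + (p * s + q * u) * f₂ x
      = p * (-f₁ x + s * f₂ x) + q * (-f₁ x + u * f₂ x) := by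
        linear_combination f₁ x * hpq
    _ ≤ p * g s + q * g u := by gcongr

lemma supporting_of_isGreatest (hg : ∀ t, IsGreatest ((fun x => -f₁ x + t * f₂ x) '' F) (g t))
    {x : E} (hx : x ∈ F) {t : ℝ} (hgt : g t = -f₁ x + t * f₂ x) (s : ℝ) :
    g t + f₂ x * (s - t) ≤ g s := by
  have := (hg s).2 ⟨x, hx, rfl⟩
  simp only at this
  linarith

end MaxOfAffine

-- `mγ k` and `ma k` stand for the slopes `f₂ (x_k^γ)` and `f₂ (x_k^α)` of supporting lines of `g`
-- at `γ k` and `a k`.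
structure AcceleratedIntervalIteration (g : ℝ → ℝ) (r : ℝ) (γ a mγ ma : ℕ → ℝ) : Prop where
  convexOn : ConvexOn ℝ univ g
  strictMono : StrictMono g
  map_root : g r = 0
  slope_lower_pos : ∀ k, 0 < mγ k
  supporting_lower : ∀ k s, g (γ k) + mγ k * (s - γ k) ≤ g s
  slope_upper_pos : ∀ k, 0 < ma k
  supporting_upper : ∀ k s, g (a k) + ma k * (s - a k) ≤ g s
  init : g (γ 0) ≤ 0 ∧ 0 ≤ g (a 0)
  ne : ∀ k, γ k ≠ a k
  lower_succ : ∀ k, γ (k + 1) = γ k - g (γ k) * (a k - γ k) / (g (a k) - g (γ k))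
  upper_succ : ∀ k, a (k + 1) = min (a k - g (a k) / ma k) (γ (k + 1) - g (γ (k + 1)) / mγ (k + 1))

namespace AcceleratedIntervalIteration

variable {g : ℝ → ℝ} {r : ℝ} {γ a mγ ma : ℕ → ℝ}

lemma root_le_upper_succ (h : AcceleratedIntervalIteration g r γ a mγ ma) (k : ℕ) :
    r ≤ a (k + 1) := by
  rw [h.upper_succ k]
  exact le_min (le_sub_div_of_supporting (h.supporting_upper k) (h.slope_upper_pos k) h.map_root)
    (le_sub_div_of_supporting (h.supporting_lower (k + 1)) (h.slope_lower_pos (k + 1)) h.map_root)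

lemma bracket (h : AcceleratedIntervalIteration g r γ a mγ ma) (k : ℕ) :
    g (γ k) ≤ 0 ∧ 0 ≤ g (a k) := by
  induction k with
  | zero => exact h.init
  | succ k ih =>
    refine ⟨?_, h.map_root ▸ h.strictMono.monotone (h.root_le_upper_succ k)⟩
    rw [h.lower_succ k]
    exact h.convexOn.map_secant_root_nonpos ih.1 ih.2 (h.strictMono.injective.ne (h.ne k))

lemma lower_le_root (h : AcceleratedIntervalIteration g r γ a mγ ma) (k : ℕ) : γ k ≤ r :=
  h.strictMono.le_iff_le.mp (h.map_root ▸ (h.bracket k).1)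

lemma root_le_upper (h : AcceleratedIntervalIteration g r γ a mγ ma) (k : ℕ) : r ≤ a k :=
  h.strictMono.le_iff_le.mp (h.map_root ▸ (h.bracket k).2)

lemma gap_pos (h : AcceleratedIntervalIteration g r γ a mγ ma) (k : ℕ) :
    0 < g (a k) - g (γ k) :=
  sub_pos.mpr (h.strictMono ((h.lower_le_root k).trans (h.root_le_upper k) |>.lt_of_ne (h.ne k)))

lemma lower_step_eq (h : AcceleratedIntervalIteration g r γ a mγ ma) (k : ℕ) :
    γ (k + 1) - γ k = -g (γ k) * (a k - γ k) / (g (a k) - g (γ k)) := by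
  rw [h.lower_succ k]; ring

lemma monotone_lower (h : AcceleratedIntervalIteration g r γ a mγ ma) : Monotone γ := by
  refine monotone_nat_of_le_succ fun k => sub_nonneg.mp ?_
  rw [h.lower_step_eq k]
  have := h.bracket k
  have := h.lower_le_root k
  have := h.root_le_upper k
  exact div_nonneg (mul_nonneg (by linarith) (by linarith)) (h.gap_pos k).le

lemma upper_succ_le (h : AcceleratedIntervalIteration g r γ a mγ ma) (k : ℕ) :
    a (k + 1) ≤ a k - g (a k) / ma k :=
  (h.upper_succ k).trans_le (min_le_left _ _)

lemma antitone_upper (h : AcceleratedIntervalIteration g r γ a mγ ma) : Antitone a := by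
  refine antitone_nat_of_succ_le fun k => ?_
  have := div_nonneg (h.bracket k).2 (h.slope_upper_pos k).le
  linarith [h.upper_succ_le k]

lemma slope_upper_le (h : AcceleratedIntervalIteration g r γ a mγ ma) (k : ℕ) :
    ma k ≤ g (a 0 + 1) := by
  have hsupp := h.supporting_upper k (a k + 1)
  have := h.strictMono.monotone
    (by linarith [h.antitone_upper (Nat.zero_le k)] : a k + 1 ≤ a 0 + 1)
  linarith [(h.bracket k).2]

theorem tendsto_lower (h : AcceleratedIntervalIteration g r γ a mγ ma) :
    Tendsto γ atTop (𝓝 r) := by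
  refine tendsto_of_monotone_of_le_of_step h.monotone_lower h.lower_le_root fun L hL => ?_
  have hgL : g L < 0 := h.map_root ▸ h.strictMono hL
  refine ⟨-g L * (r - L) / (g (a 0) - g (γ 0)),
    div_pos (mul_pos (neg_pos.mpr hgL) (sub_pos.mpr hL)) (h.gap_pos 0), fun k hk => ?_⟩
  have hgap : g (a k) - g (γ k) ≤ g (a 0) - g (γ 0) :=
    sub_le_sub (h.strictMono.monotone (h.antitone_upper (Nat.zero_le k)))
      (h.strictMono.monotone (h.monotone_lower (Nat.zero_le k)))
  have hgk : -g L ≤ -g (γ k) := neg_le_neg (h.strictMono.monotone hk)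
  have hrk : r - L ≤ a k - γ k := by linarith [h.root_le_upper k]
  have hstep : -g L * (r - L) / (g (a 0) - g (γ 0)) ≤ γ (k + 1) - γ k := by
    rw [h.lower_step_eq k]
    exact div_le_div₀ (mul_nonneg (by linarith) (by linarith))
      (mul_le_mul hgk hrk (by linarith) (by linarith)) (h.gap_pos k) hgap
  linarith

theorem tendsto_upper (h : AcceleratedIntervalIteration g r γ a mγ ma) :
    Tendsto a atTop (𝓝 r) := by
  refine tendsto_of_antitone_of_le_of_step h.antitone_upper h.root_le_upper fun L hL => ?_
  have hgL : 0 < g L := h.map_root ▸ h.strictMono hL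
  refine ⟨g L / g (a 0 + 1), div_pos hgL ((h.slope_upper_pos 0).trans_le (h.slope_upper_le 0)),
    fun k hk => ?_⟩
  have hstep : g L / g (a 0 + 1) ≤ g (a k) / ma k :=
    div_le_div₀ (h.bracket k).2 (h.strictMono.monotone hk) (h.slope_upper_pos k) (h.slope_upper_le k)
  linarith [h.upper_succ_le k]

end AcceleratedIntervalIteration

theorem stmt_6_general {n : ℕ} (F : Set (Fin n → ℝ))
    (f₁ f₂ : (Fin n → ℝ) → ℝ)
    (hf₂pos : ∀ x ∈ F, 0 < f₂ x)
    (g : ℝ → ℝ)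
    (hg : ∀ t : ℝ, IsGreatest ((fun x => -f₁ x + t * f₂ x) '' F) (g t))
    (hgmono : StrictMono g)
    (αstar : ℝ) (hroot : g αstar = 0)
    (γ a : ℕ → ℝ)
    (xγ xa : ℕ → (Fin n → ℝ))
    (hxγ : ∀ k, xγ k ∈ F ∧ g (γ k) = -f₁ (xγ k) + γ k * f₂ (xγ k))
    (hxa : ∀ k, xa k ∈ F ∧ g (a k) = -f₁ (xa k) + a k * f₂ (xa k))
    (hinit : g (γ 0) ≤ 0 ∧ 0 ≤ g (a 0))
    (hne : ∀ k, γ k ≠ a k)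
    (hγrec : ∀ k, γ (k + 1) = γ k - g (γ k) * (a k - γ k) / (g (a k) - g (γ k)))
    (harec : ∀ k, a (k + 1) =
      min (a k - g (a k) / f₂ (xa k)) (γ (k + 1) - g (γ (k + 1)) / f₂ (xγ (k + 1)))) :
    Filter.Tendsto γ Filter.atTop (nhds αstar) ∧
    Filter.Tendsto a Filter.atTop (nhds αstar) := by
  have h : AcceleratedIntervalIteration g αstar γ a (fun k => f₂ (xγ k)) (fun k => f₂ (xa k)) :=
    { convexOn := convexOn_of_isGreatest hg
      strictMono := hgmono
      map_root := hroot
      slope_lower_pos := fun k => hf₂pos _ (hxγ k).1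
      supporting_lower := fun k => supporting_of_isGreatest hg (hxγ k).1 (hxγ k).2
      slope_upper_pos := fun k => hf₂pos _ (hxa k).1
      supporting_upper := fun k => supporting_of_isGreatest hg (hxa k).1 (hxa k).2
      init := hinit
      ne := hne
      lower_succ := hγrec
      upper_succ := harec }
  exact ⟨h.tendsto_lower, h.tendsto_upper⟩

/-- Under the accelerated interval Dinkelbach iteration with
γ₀ ≤ α* ≤ α₀, both sequences converge to α*, the unique root of g. -/
theorem stmt_6 {n : ℕ} (F : Set (Fin n → ℝ)) (hFne : F.Nonempty) (hFc : IsCompact F)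
    (f₁ f₂ : (Fin n → ℝ) → ℝ) (hf₁ : ContinuousOn f₁ F) (hf₂ : ContinuousOn f₂ F)
    (hf₂pos : ∀ x ∈ F, 0 < f₂ x)
    (g : ℝ → ℝ)
    (hg : ∀ t : ℝ, IsGreatest ((fun x => -f₁ x + t * f₂ x) '' F) (g t))
    (hgcont : Continuous g) (hgmono : StrictMono g)
    (αstar : ℝ) (hroot : g αstar = 0)
    (γ a : ℕ → ℝ)
    (hbracket0 : γ 0 ≤ αstar ∧ αstar ≤ a 0)
    (xγ xa : ℕ → (Fin n → ℝ))
    (hxγ : ∀ k, xγ k ∈ F ∧ g (γ k) = -f₁ (xγ k) + γ k * f₂ (xγ k))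
    (hxa : ∀ k, xa k ∈ F ∧ g (a k) = -f₁ (xa k) + a k * f₂ (xa k))
    (hinit : g (γ 0) ≤ 0 ∧ 0 ≤ g (a 0))
    (hne : ∀ k, γ k ≠ a k)
    (hγrec : ∀ k, γ (k + 1) = γ k - g (γ k) * (a k - γ k) / (g (a k) - g (γ k)))
    (harec : ∀ k, a (k + 1) =
      min (a k - g (a k) / f₂ (xa k)) (γ (k + 1) - g (γ (k + 1)) / f₂ (xγ (k + 1)))) :
    Filter.Tendsto γ Filter.atTop (nhds αstar) ∧
    Filter.Tendsto a Filter.atTop (nhds αstar) :=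
  stmt_6_general F f₁ f₂ hf₂pos g hg hgmono αstar hroot γ a xγ xa hxγ hxa hinit hne hγrec harec
end

section
/- Let g be C² and increasing with root α*, and suppose α_{k-1} < α* < α_k with f₂(x_k) a subgradient of g at α_k satisfying δg(α*, α_k) ≤ f₂(x_k). If the accelerated-Newton step α_{k+1} = α_k - g(α_k)(g(α_k)-g(α_{k-1}))(α_k-α_{k-1}) / [g(α_k)(g(α_k)-g(α_{k-1})) - g(α_{k-1})f₂(x_k)(α_k-α_{k-1})] satisfies α_{k+1} ≥ α*, then α_{k+1} - α* ≤ α_k - α* - g(α_k)/f₂(x_k), i.e., the accelerated step is at least as good as the Dinkelbach step. -/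
/-- Cross-multiplying, the right side minus the left side becomes `a ^ 2 * (f * d - (a - b))`. -/
theorem div_le_accelNewton_correction {a b d f : ℝ} (ha : 0 < a) (hb : b < 0) (hf : 0 < f)
    (hab : a - b ≤ f * d) :
    a / f ≤ a * (a - b) * d / (a * (a - b) - b * f * d) := by
  have hd : 0 < d := pos_of_mul_pos_right (by linarith) hf.le
  have hden : 0 < a * (a - b) - b * f * d := by
    have : 0 < a * (a - b) := mul_pos ha (by linarith)
    have : b * f * d < 0 := mul_neg_of_neg_of_pos (mul_neg_of_neg_of_pos hb hf) hd
    linarith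
  rw [div_le_div_iff₀ hf hden]
  linear_combination a ^ 2 * hab

theorem stmt_11_general (g : ℝ → ℝ) (αkm αk αstar : ℝ)
    (hmono : StrictMono g)
    (hroot : g αstar = 0)
    (h1 : αkm < αstar) (h2 : αstar < αk)
    (fk : ℝ)
    (hfkpos : 0 < fk)
    -- chain of divided-difference inequalities:
    (hc5 : (g αk - g αkm) / (αk - αkm) ≤ fk)
    (αk1 : ℝ)
    (hstep : αk1 = αk - g αk * (g αk - g αkm) * (αk - αkm) /
      (g αk * (g αk - g αkm) - g αkm * fk * (αk - αkm))) :
    αk1 - αstar ≤ αk - αstar - g αk / fk := by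
  have hpos : 0 < g αk := hroot ▸ hmono h2
  have hneg : g αkm < 0 := hroot ▸ hmono h1
  have hsecant : g αk - g αkm ≤ fk * (αk - αkm) := by
    rw [div_le_iff₀ (sub_pos.2 (h1.trans h2))] at hc5
    linarith
  have := div_le_accelNewton_correction hpos hneg hfkpos hsecant
  rw [hstep]
  linarith

/-- Case 1.1: With α_{k-1} < α* < α_k and the accelerated-Newton step
landing at or above α*, the accelerated step is at least as good as the Dinkelbach
step: α_{k+1} - α* ≤ α_k - α* - g(α_k)/f₂(x_k). -/
theorem stmt_11 (g : ℝ → ℝ) (αkm αk αstar : ℝ)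
    (hconv : ConvexOn ℝ Set.univ g) (hmono : StrictMono g)
    (hC2 : ContDiff ℝ 2 g)
    (hroot : g αstar = 0)
    (h1 : αkm < αstar) (h2 : αstar < αk)
    (fkm fk fstar : ℝ)
    (hfkmpos : 0 < fkm) (hfstarpos : 0 < fstar) (hfkpos : 0 < fk)
    -- f₂(x_k) is a subgradient of g at α_k:
    (hsubgrad : ∀ β : ℝ, g αk + fk * (β - αk) ≤ g β)
    -- chain of divided-difference inequalities:
    (hc1 : fkm ≤ (g αkm - g αstar) / (αkm - αstar))
    (hc2 : (g αkm - g αstar) / (αkm - αstar) ≤ fstar)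
    (hc3 : fstar ≤ (g αstar - g αk) / (αstar - αk))
    (hc4 : (g αstar - g αk) / (αstar - αk) ≤ fk)
    (hc5 : (g αk - g αkm) / (αk - αkm) ≤ fk)
    (αk1 : ℝ)
    (hstep : αk1 = αk - g αk * (g αk - g αkm) * (αk - αkm) /
      (g αk * (g αk - g αkm) - g αkm * fk * (αk - αkm)))
    (hup : αstar ≤ αk1) :
    αk1 - αstar ≤ αk - αstar - g αk / fk :=
  stmt_11_general g αkm αk αstar hmono hroot h1 h2 fk hfkpos hc5 αk1 hstep
end

section
/- Under the same configuration (α_{k-1} < α* < α_k), if the accelerated-Newton step produces α_{k+1} < α*, then the undershoot is controlled: |α_{k+1} - α*| ≤ M·|α_k - α*|, where M = (f₂(x_{-1}) - min_{ξ∈F} f₂(ξ))/min_{ξ∈F} f₂(ξ) with f₂(x_{-1}) an upper bound on all subgradient values used. -/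
/-!
Write `a = g(α_k) > 0`, `b = -g(α_{k-1}) > 0`, `s = α_k - α_{k-1}` and `t = α_k - α*`. The step
length is `a (a + b) s / (a (a + b) + b f₂(x_k) s)`, and the undershoot is the step length minus
`t`. The divided differences of `g` around `α*` and the subgradient inequality at `α_k` give
`m t ≤ a ≤ f₂(x_k) t` and `m (s - t) ≤ b`, where `m = min_F f₂`; hence `m s ≤ a + b`, and the
step length is at most `(f₂(x₋₁) / m) t`.
-/

/-- The accelerated-Newton iterate computed from `x = α_{k-1}`, `y = α_k` and the subgradient
`c = f₂(x_k)` of `g` at `y`. -/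
noncomputable def acceleratedNewtonStep (g : ℝ → ℝ) (x y c : ℝ) : ℝ :=
  y - g y * (g y - g x) * (y - x) / (g y * (g y - g x) - g x * c * (y - x))

lemma mul_sub_le_of_le_div_sub {c u v p q : ℝ} (hpq : p < q) (h : c ≤ (u - v) / (p - q)) :
    c * (q - p) ≤ v - u := by
  rwa [← neg_div_neg_eq, neg_sub, neg_sub, le_div_iff₀ (sub_pos.2 hpq)] at h

lemma mul_step_length_le {a b s t m c M : ℝ} (ha : 0 ≤ a) (hb : 0 ≤ b) (hs : 0 ≤ s)
    (ht : 0 ≤ t) (hm : 0 ≤ m) (hmc : m ≤ c) (hcM : c ≤ M) (hac : a ≤ c * t)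
    (hms : m * s ≤ a + b) :
    m * (a * (a + b) * s) ≤ M * t * (a * (a + b) + b * c * s) := by
  have hc : 0 ≤ c := hm.trans hmc
  calc m * (a * (a + b) * s) ≤ m * (c * t * (a + b) * s) := by gcongr
    _ = c * t * a * (m * s) + m * t * (b * c * s) := by ring
    _ ≤ c * t * a * (a + b) + c * t * (b * c * s) := by gcongr
    _ ≤ M * t * (a * (a + b) + b * c * s) := by
      have := mul_le_mul_of_nonneg_right hcM (by positivity : 0 ≤ t * (a * (a + b) + b * c * s))
      linarith

theorem sub_acceleratedNewtonStep_le {g : ℝ → ℝ} {x r y m c M : ℝ} (hxr : x < r) (hry : r < y)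
    (hm : 0 < m) (hmc : m ≤ c) (hcM : c ≤ M) (hx : m * (r - x) ≤ -g x)
    (hy : m * (y - r) ≤ g y) (hyc : g y ≤ c * (y - r)) :
    r - acceleratedNewtonStep g x y c ≤ (M - m) / m * (y - r) := by
  set a := g y
  set b := -g x
  have ha : 0 < a := lt_of_lt_of_le (by nlinarith) hy
  have hb : 0 < b := lt_of_lt_of_le (by nlinarith) hx
  have hD : 0 < a * (a + b) + b * c * (y - x) := by
    have : 0 < c := hm.trans_le hmc
    have : 0 < y - x := by linarith
    positivity
  have hstep : acceleratedNewtonStep g x y c =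
      y - a * (a + b) * (y - x) / (a * (a + b) + b * c * (y - x)) := by
    rw [acceleratedNewtonStep, show g x = -b from (neg_neg _).symm]
    ring
  have hlen : a * (a + b) * (y - x) / (a * (a + b) + b * c * (y - x)) ≤ M / m * (y - r) := by
    rw [div_le_iff₀ hD, div_mul_eq_mul_div, div_mul_eq_mul_div, le_div_iff₀' hm]
    exact mul_step_length_le ha.le hb.le (by linarith) (by linarith) hm.le hmc hcM hyc
      (by linarith)
  rw [hstep, sub_div, div_self hm.ne']
  linarith

theorem stmt_12_general (g : ℝ → ℝ) (αkm αk αstar : ℝ)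
    (hroot : g αstar = 0)
    (h1 : αkm < αstar) (h2 : αstar < αk)
    (fmin fmax fkm fk fstar : ℝ)
    (hfminpos : 0 < fmin)
    -- all subgradient values lie in [fmin, fmax]:
    (hb1 : fmin ≤ fkm) (hb3 : fmin ≤ fk) (hb4 : fk ≤ fmax)
    (hb5 : fmin ≤ fstar)
    -- f₂(x_k) is a subgradient of g at α_k:
    (hsubgrad : ∀ β : ℝ, g αk + fk * (β - αk) ≤ g β)
    -- chain of divided-difference inequalities:
    (hc1 : fkm ≤ (g αkm - g αstar) / (αkm - αstar))
    (hc3 : fstar ≤ (g αstar - g αk) / (αstar - αk))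
    (αk1 : ℝ)
    (hstep : αk1 = αk - g αk * (g αk - g αkm) * (αk - αkm) /
      (g αk * (g αk - g αkm) - g αkm * fk * (αk - αkm)))
    (hdown : αk1 < αstar) :
    |αk1 - αstar| ≤ (fmax - fmin) / fmin * |αk - αstar| := by
  have hleft := mul_sub_le_of_le_div_sub h1 hc1
  have hright := mul_sub_le_of_le_div_sub h2 hc3
  have hsub := hsubgrad αstar
  rw [hroot] at hleft hright hsub
  have hstep' : αk1 = acceleratedNewtonStep g αkm αk fk := hstep
  rw [abs_of_neg (sub_neg.2 hdown), abs_of_pos (sub_pos.2 h2), neg_sub, hstep']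
  refine sub_acceleratedNewtonStep_le h1 h2 hfminpos hb3 hb4 ?_ ?_ (by linarith)
  · exact (mul_le_mul_of_nonneg_right hb1 (sub_pos.2 h1).le).trans (by linarith)
  · exact (mul_le_mul_of_nonneg_right hb5 (sub_pos.2 h2).le).trans (by linarith)

/-- Case 1.2: With α_{k-1} < α* < α_k, if the accelerated-Newton step
undershoots (α_{k+1} < α*), then |α_{k+1} - α*| ≤ M·|α_k - α*|, where
M = (f₂(x₋₁) - min_F f₂)/min_F f₂ bounds the range of subgradient values. -/
theorem stmt_12 (g : ℝ → ℝ) (αkm αk αstar : ℝ)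
    (hconv : ConvexOn ℝ Set.univ g) (hmono : StrictMono g)
    (hroot : g αstar = 0)
    (h1 : αkm < αstar) (h2 : αstar < αk)
    (fmin fmax fkm fk fstar : ℝ)
    (hfminpos : 0 < fmin)
    -- all subgradient values lie in [fmin, fmax]:
    (hb1 : fmin ≤ fkm) (hb2 : fkm ≤ fmax) (hb3 : fmin ≤ fk) (hb4 : fk ≤ fmax)
    (hb5 : fmin ≤ fstar) (hb6 : fstar ≤ fmax)
    -- f₂(x_k) is a subgradient of g at α_k:
    (hsubgrad : ∀ β : ℝ, g αk + fk * (β - αk) ≤ g β)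
    -- chain of divided-difference inequalities:
    (hc1 : fkm ≤ (g αkm - g αstar) / (αkm - αstar))
    (hc2 : (g αkm - g αstar) / (αkm - αstar) ≤ fstar)
    (hc3 : fstar ≤ (g αstar - g αk) / (αstar - αk))
    (hc4 : (g αstar - g αk) / (αstar - αk) ≤ fk)
    (hc5 : (g αk - g αkm) / (αk - αkm) ≤ fk)
    (αk1 : ℝ)
    (hstep : αk1 = αk - g αk * (g αk - g αkm) * (αk - αkm) /
      (g αk * (g αk - g αkm) - g αkm * fk * (αk - αkm)))
    (hdown : αk1 < αstar) :
    |αk1 - αstar| ≤ (fmax - fmin) / fmin * |αk - αstar| :=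
  stmt_12_general g αkm αk αstar hroot h1 h2 fmin fmax fkm fk fstar hfminpos hb1 hb3 hb4 hb5
    hsubgrad hc1 hc3 αk1 hstep hdown
end

section
/- Let g be convex and strictly increasing with root α*, and α* < α_k < α_{k-1}. If ρ > 1 and the screening condition g(α_{k-1})·f₂(x_k)·(α_k - α_{k-1}) ≤ ρ·g(α_k)·(g(α_k) - g(α_{k-1})) holds, then the denominator D = g(α_k)(g(α_k)-g(α_{k-1})) - g(α_{k-1})f₂(x_k)(α_k - α_{k-1}) of the accelerated-Newton step is positive; specifically D ≥ ((ρ-1)/ρ)·g(α_{k-1})·f₂(x_k)·(α_{k-1} - α_k) > 0. -/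
/-! The screening condition says exactly that `g(α_k)(g(α_k) - g(α_{k-1})) ≥ -x/ρ`, where
`x = g(α_{k-1}) f₂(x_k) (α_{k-1} - α_k)`, so `D ≥ x - x/ρ = ((ρ-1)/ρ) x`; and `x > 0` because
`g(α_{k-1}) > g(α*) = 0`. -/

lemma div_mul_le_add_of_neg_le_mul {a x ρ : ℝ} (hρ : 0 < ρ) (h : -x ≤ ρ * a) :
    (ρ - 1) / ρ * x ≤ a + x := by
  rw [div_mul_eq_mul_div, div_le_iff₀ hρ]
  linarith

theorem stmt_13_general (g : ℝ → ℝ) (αkm αk αstar : ℝ)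
    (hmono : StrictMono g)
    (hroot : g αstar = 0)
    (h1 : αstar < αk) (h2 : αk < αkm)
    (fk : ℝ) (hfk : 0 < fk)
    (ρ : ℝ) (hρ : 1 < ρ)
    (hscreen : g αkm * fk * (αk - αkm) ≤ ρ * g αk * (g αk - g αkm)) :
    (ρ - 1) / ρ * (g αkm * fk * (αkm - αk)) ≤
        g αk * (g αk - g αkm) - g αkm * fk * (αk - αkm) ∧
    0 < g αk * (g αk - g αkm) - g αkm * fk * (αk - αkm) := by
  have hgkm : 0 < g αkm := hroot ▸ hmono (h1.trans h2)
  have hx : 0 < g αkm * fk * (αkm - αk) := by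
    have := sub_pos.2 h2
    positivity
  have hD : g αk * (g αk - g αkm) - g αkm * fk * (αk - αkm) =
      g αk * (g αk - g αkm) + g αkm * fk * (αkm - αk) := by ring
  have hbound : (ρ - 1) / ρ * (g αkm * fk * (αkm - αk)) ≤
      g αk * (g αk - g αkm) + g αkm * fk * (αkm - αk) :=
    div_mul_le_add_of_neg_le_mul (by linarith) (by linarith)
  have hfactor : 0 < (ρ - 1) / ρ * (g αkm * fk * (αkm - αk)) := by
    have := sub_pos.2 hρ
    positivity
  rw [hD]
  exact ⟨hbound, hfactor.trans_le hbound⟩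

/-- If α* < α_k < α_{k-1}, ρ > 1 and the screening condition holds,
then the denominator D of the accelerated-Newton step satisfies
D ≥ ((ρ-1)/ρ)·g(α_{k-1})·f₂(x_k)·(α_{k-1} - α_k) > 0. -/
theorem stmt_13 (g : ℝ → ℝ) (αkm αk αstar : ℝ)
    (hmono : StrictMono g)
    (hroot : g αstar = 0)
    (h1 : αstar < αk) (h2 : αk < αkm)
    (fk : ℝ) (hfk : 0 < fk)
    -- f₂(x_k) is a subgradient of g at α_k:
    (hsubgrad : ∀ β : ℝ, g αk + fk * (β - αk) ≤ g β)
    (ρ : ℝ) (hρ : 1 < ρ)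
    (hscreen : g αkm * fk * (αk - αkm) ≤ ρ * g αk * (g αk - g αkm)) :
    (ρ - 1) / ρ * (g αkm * fk * (αkm - αk)) ≤
        g αk * (g αk - g αkm) - g αkm * fk * (αk - αkm) ∧
    0 < g αk * (g αk - g αkm) - g αkm * fk * (αk - αkm) :=
  stmt_13_general g αkm αk αstar hmono hroot h1 h2 fk hfk ρ hρ hscreen
end

section
/- For α* < α_k < α_{k-1} with the screening condition (ρ > 1) holding, if the accelerated-Newton step satisfies α_{k+1} ≥ α*, then α_{k+1} - α* ≤ α_k - α* - g(α_k)/f₂(x_k); if instead α_{k+1} < α*, then α* - α_{k+1} ≤ M'·(α_k - α*) with M' = ρ·(f₂(x_{k-1}) - f₂(x*))/((ρ-1)·f₂(x*)). -/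
/-!
Write `A = g αk`, `B = g αkm`, `t = αk - α*`, `u = αkm - αk`; the Newton step then moves `αk` down by
`accelStep A B u fk`, and every hypothesis becomes a polynomial inequality in these quantities.
The Dinkelbach step `A / fk` is shorter than `accelStep` because `fk` is at most the secant slope
`(B - A) / u`. For the undershoot, the screening condition keeps the denominator of `accelStep`
above `(ρ - 1) / ρ · B fk u`, while the secant slopes through `α*`, `αk`, `αkm` bound the numerator
of `accelStep - t` by `fk t u (t + u) (fkm - f*)`; finally `f* (t + u) ≤ B` turns `(t + u) / B`
into `1 / f*`.
-/

noncomputable def accelStep (A B u fk : ℝ) : ℝ :=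
  A * (B - A) * u / (B * fk * u - A * (B - A))

section AccelStep

variable {A B t u fk fkm fstar ρ : ℝ}

lemma screen_denom_bound (hρ : 1 < ρ) (hscreen : ρ * (A * (B - A)) ≤ B * fk * u) :
    (ρ - 1) / ρ * (B * fk * u) ≤ B * fk * u - A * (B - A) := by
  rw [div_mul_eq_mul_div, div_le_iff₀ (by linarith)]
  linarith

lemma accelStep_denom_pos (hB : 0 < B) (hu : 0 < u) (hfk : 0 < fk) (hρ : 1 < ρ)
    (hscreen : ρ * (A * (B - A)) ≤ B * fk * u) :
    0 < B * fk * u - A * (B - A) := by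
  have : 0 < (ρ - 1) / ρ := div_pos (by linarith) (by linarith)
  exact (mul_pos this (by positivity)).trans_le (screen_denom_bound hρ hscreen)

lemma div_le_accelStep (hB : 0 < B) (hu : 0 < u) (hfk : 0 < fk) (hρ : 1 < ρ)
    (hscreen : ρ * (A * (B - A)) ≤ B * fk * u) (hslope_k : fk * u ≤ B - A) :
    A / fk ≤ accelStep A B u fk := by
  rw [accelStep, div_le_div_iff₀ hfk (accelStep_denom_pos hB hu hfk hρ hscreen)]
  nlinarith [mul_le_mul_of_nonneg_left hslope_k (sq_nonneg A)]

lemma accelStep_sub_le (hA : 0 < A) (hAB : A < B) (ht : 0 < t) (hu : 0 < u)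
    (hfstar : 0 < fstar) (hρ : 1 < ρ)
    (hslope_star : A ≤ fk * t) (hslope_km : B - A ≤ fkm * u) (hstar : fstar * (t + u) ≤ B)
    (hscreen : ρ * (A * (B - A)) ≤ B * fk * u) (hlt : t < accelStep A B u fk) :
    accelStep A B u fk - t ≤ ρ * (fkm - fstar) / ((ρ - 1) * fstar) * t := by
  have hfk : 0 < fk := pos_of_mul_pos_left (hA.trans_le hslope_star) ht.le
  have hB : 0 < B := hA.trans hAB
  set D := B * fk * u - A * (B - A)
  have hD : 0 < D := accelStep_denom_pos hB hu hfk hρ hscreen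
  -- the gap is `(t + u) (B - A) (fk t - A) + fk t (t + u) (fkm u - (B - A))`
  -- `+ fk t u (B - f* (t + u))`
  have hnum : A * (B - A) * u - t * D ≤ fk * t * u * (t + u) * (fkm - fstar) := by
    nlinarith [mul_nonneg (mul_nonneg (by positivity : 0 ≤ t + u) (sub_nonneg.2 hAB.le))
        (sub_nonneg.2 hslope_star),
      mul_nonneg (by positivity : 0 ≤ fk * t * (t + u)) (sub_nonneg.2 hslope_km),
      mul_nonneg (by positivity : 0 ≤ fk * t * u) (sub_nonneg.2 hstar)]
  have hgap : accelStep A B u fk - t = (A * (B - A) * u - t * D) / D := by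
    rw [accelStep, sub_div, mul_div_cancel_right₀ _ hD.ne']
  have hnum_pos : 0 < A * (B - A) * u - t * D := by
    have := sub_pos.2 hlt
    rwa [hgap, div_pos_iff_of_pos_right hD] at this
  have hfkm : 0 < fkm - fstar :=
    pos_of_mul_pos_right (hnum_pos.trans_le hnum) (by positivity)
  calc accelStep A B u fk - t = (A * (B - A) * u - t * D) / D := hgap
    _ ≤ fk * t * u * (t + u) * (fkm - fstar) / D := by gcongr
    _ ≤ fk * t * u * (t + u) * (fkm - fstar) / ((ρ - 1) / ρ * (B * fk * u)) :=
        div_le_div_of_nonneg_left (mul_pos (by positivity) hfkm).le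
          (mul_pos (div_pos (by linarith) (by linarith)) (by positivity))
          (screen_denom_bound hρ hscreen)
    _ = ρ * (fkm - fstar) / (ρ - 1) * t * ((t + u) / B) := by
        field_simp
    _ ≤ ρ * (fkm - fstar) / (ρ - 1) * t * (1 / fstar) := by
        gcongr _ * ?_
        rwa [div_le_div_iff₀ hB hfstar, one_mul, mul_comm]
    _ = ρ * (fkm - fstar) / ((ρ - 1) * fstar) * t := by
        field_simp

end AccelStep

theorem stmt_15_general (g : ℝ → ℝ) (αkm αk αstar : ℝ)
    (hmono : StrictMono g)
    (hroot : g αstar = 0)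
    (h1 : αstar < αk) (h2 : αk < αkm)
    (fstar fk fkm : ℝ) (hfstarpos : 0 < fstar)
    -- chain of divided-difference inequalities:
    (hc2 : (g αstar - g αk) / (αstar - αk) ≤ fk)
    (hc3 : fk ≤ (g αk - g αkm) / (αk - αkm))
    (hc4 : (g αk - g αkm) / (αk - αkm) ≤ fkm)
    (hc5 : fstar ≤ (g αkm - g αstar) / (αkm - αstar))
    (ρ : ℝ) (hρ : 1 < ρ)
    (hscreen : g αkm * fk * (αk - αkm) ≤ ρ * g αk * (g αk - g αkm))
    (αk1 : ℝ)
    (hstep : αk1 = αk - g αk * (g αk - g αkm) * (αk - αkm) /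
      (g αk * (g αk - g αkm) - g αkm * fk * (αk - αkm))) :
    (αstar ≤ αk1 → αk1 - αstar ≤ αk - αstar - g αk / fk) ∧
    (αk1 < αstar →
      αstar - αk1 ≤ ρ * (fkm - fstar) / ((ρ - 1) * fstar) * (αk - αstar)) := by
  have ht : 0 < αk - αstar := sub_pos.2 h1
  have hu : 0 < αkm - αk := sub_pos.2 h2
  have hA : 0 < g αk := hroot ▸ hmono h1
  have hAB : g αk < g αkm := hmono h2
  have hslope_star : g αk ≤ fk * (αk - αstar) := by
    rw [div_le_iff_of_neg (by linarith), hroot] at hc2; linarith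
  have hslope_k : fk * (αkm - αk) ≤ g αkm - g αk := by
    rw [le_div_iff_of_neg (by linarith)] at hc3; linarith
  have hslope_km : g αkm - g αk ≤ fkm * (αkm - αk) := by
    rw [div_le_iff_of_neg (by linarith)] at hc4; linarith
  have hstar : fstar * ((αk - αstar) + (αkm - αk)) ≤ g αkm := by
    rw [le_div_iff₀ (by linarith), hroot] at hc5; linarith
  have hscreen' : ρ * (g αk * (g αkm - g αk)) ≤ g αkm * fk * (αkm - αk) := by linarith
  have hfk : 0 < fk := pos_of_mul_pos_left (hA.trans_le hslope_star) ht.le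
  have hαk1 : αk1 = αk - accelStep (g αk) (g αkm) (αkm - αk) fk := by
    rw [hstep, accelStep]; ring
  refine ⟨fun _ => ?_, fun hlt => ?_⟩
  · linarith [div_le_accelStep (hA.trans hAB) hu hfk hρ hscreen' hslope_k]
  · linarith [accelStep_sub_le hA hAB ht hu hfstarpos hρ hslope_star hslope_km hstar hscreen'
      (by linarith)]

/-- Case 2: For α* < α_k < α_{k-1} with the screening condition (ρ > 1),
if the accelerated-Newton step lands at or above α* then it is at least as good as the
Dinkelbach step; if it undershoots, the undershoot is bounded by
M'·(α_k - α*) with M' = ρ(f₂(x_{k-1}) - f₂(x*))/((ρ-1)f₂(x*)). -/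
theorem stmt_15 (g : ℝ → ℝ) (αkm αk αstar : ℝ)
    (hconv : ConvexOn ℝ Set.univ g) (hmono : StrictMono g)
    (hroot : g αstar = 0)
    (h1 : αstar < αk) (h2 : αk < αkm)
    (fstar fk fkm : ℝ) (hfstarpos : 0 < fstar)
    -- f₂(x_k) is a subgradient of g at α_k:
    (hsubgrad : ∀ β : ℝ, g αk + fk * (β - αk) ≤ g β)
    -- chain of divided-difference inequalities:
    (hc1 : fstar ≤ (g αstar - g αk) / (αstar - αk))
    (hc2 : (g αstar - g αk) / (αstar - αk) ≤ fk)
    (hc3 : fk ≤ (g αk - g αkm) / (αk - αkm))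
    (hc4 : (g αk - g αkm) / (αk - αkm) ≤ fkm)
    (hc5 : fstar ≤ (g αkm - g αstar) / (αkm - αstar))
    (ρ : ℝ) (hρ : 1 < ρ)
    (hscreen : g αkm * fk * (αk - αkm) ≤ ρ * g αk * (g αk - g αkm))
    (αk1 : ℝ)
    (hstep : αk1 = αk - g αk * (g αk - g αkm) * (αk - αkm) /
      (g αk * (g αk - g αkm) - g αkm * fk * (αk - αkm))) :
    (αstar ≤ αk1 → αk1 - αstar ≤ αk - αstar - g αk / fk) ∧
    (αk1 < αstar →
      αstar - αk1 ≤ ρ * (fkm - fstar) / ((ρ - 1) * fstar) * (αk - αstar)) :=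
  stmt_15_general g αkm αk αstar hmono hroot h1 h2 fstar fk fkm hfstarpos hc2 hc3 hc4 hc5 ρ hρ
    hscreen αk1 hstep
end

section
/- Let g be C² on [a,b] with α* ∈ (a,b), g(α*) = 0, g increasing with g' ≥ m > 0 on [a,b]. If α_{k+1} ∈ [a, α*] and the next iterate is α_{k+2} = min(α_{k+1} - g(α_{k+1})/s_{k+1}, α_k - g(α_k)/s_k) where s_t ∈ ∂g(t) with s_t ≥ m, and α_{k+2} ≥ α*, then α_{k+2} - α* ≤ (σ/m)·(α_{k+1} - α*)², where σ = max_{ξ∈[a,b]}|g''(ξ)|. Thus the two-tangent recovery step converges quadratically. -/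
/-!
The two-tangent iterate is at most the Newton iterate from `αk1`. Expanding `g` to second order
at `αk1` and using `g αstar = 0`, the Newton error is `g''(ξ) (αk1 - αstar)² / (2 g'(αk1))`, which
is at most `σ / (2m) · (αk1 - αstar)²`.
-/

open Set

theorem exists_eq_add_deriv_mul_add_deriv_deriv_mul_sq {f : ℝ → ℝ} {x y : ℝ} (hxy : x < y)
    (hf : ContDiffOn ℝ 2 f (Icc x y)) (hfx : DifferentiableAt ℝ f x) :
    ∃ ξ ∈ Ioo x y, f y = f x + deriv f x * (y - x) + deriv (deriv f) ξ / 2 * (y - x) ^ 2 := by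
  obtain ⟨ξ, hξ, h⟩ := taylor_mean_remainder_lagrange_iteratedDeriv (n := 1) hxy.ne
    (by rwa [uIcc_of_le hxy.le])
  rw [uIoo_of_le hxy.le] at hξ
  refine ⟨ξ, hξ, ?_⟩
  rw [taylorWithinEval_succ, taylor_within_zero_eval, iteratedDerivWithin_one,
    hfx.derivWithin ((uniqueDiffOn_uIcc hxy.ne) x left_mem_uIcc), iteratedDeriv_succ,
    iteratedDeriv_one] at h
  norm_num at h
  linarith

theorem newton_step_sub_le_of_abs_deriv_deriv_le {g : ℝ → ℝ} {x r m σ : ℝ} (hxr : x ≤ r)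
    (hg : ContDiffOn ℝ 2 g (Icc x r)) (hr : g r = 0) (hm : 0 < m) (hmx : m ≤ deriv g x)
    (hσ : ∀ ξ ∈ Icc x r, |deriv (deriv g) ξ| ≤ σ) :
    x - g x / deriv g x - r ≤ σ / (2 * m) * (x - r) ^ 2 := by
  rcases hxr.eq_or_lt with rfl | hlt
  · simp [hr]
  have hd : 0 < deriv g x := hm.trans_le hmx
  obtain ⟨ξ, hξ, htaylor⟩ := exists_eq_add_deriv_mul_add_deriv_deriv_mul_sq hlt hg
    (differentiableAt_of_deriv_ne_zero hd.ne')
  set q := deriv (deriv g) ξ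
  have hq : q ≤ σ := (le_abs_self q).trans (hσ ξ (Ioo_subset_Icc_self hξ))
  have hσ0 : 0 ≤ σ := (abs_nonneg q).trans (hσ ξ (Ioo_subset_Icc_self hξ))
  have herror : x - g x / deriv g x - r = q / (2 * deriv g x) * (x - r) ^ 2 := by
    field_simp
    linear_combination 2 * htaylor - 2 * hr
  rw [herror]
  gcongr ?_ * _
  calc q / (2 * deriv g x) ≤ σ / (2 * deriv g x) := by gcongr
    _ ≤ σ / (2 * m) := by gcongr

theorem stmt_17_general (g : ℝ → ℝ) (a b αstar : ℝ)
    (hstar : αstar ∈ Set.Ioo a b)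
    (hC2 : ContDiffOn ℝ 2 g (Set.Icc a b))
    (hroot : g αstar = 0)
    (m : ℝ) (hm : 0 < m)
    (hm' : ∀ t ∈ Set.Icc a b, m ≤ deriv g t)
    (σ : ℝ) (hσ : ∀ ξ ∈ Set.Icc a b, |deriv (deriv g) ξ| ≤ σ)
    (αk αk1 : ℝ)
    (hαk1 : αk1 ∈ Set.Icc a αstar)
    (αk2 : ℝ)
    (hstep : αk2 = min (αk1 - g αk1 / deriv g αk1) (αk - g αk / deriv g αk)) :
    αk2 - αstar ≤ σ / m * (αk1 - αstar) ^ 2 := by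
  have hsub : Icc αk1 αstar ⊆ Icc a b := Icc_subset_Icc hαk1.1 hstar.2.le
  have hnewton := newton_step_sub_le_of_abs_deriv_deriv_le hαk1.2 (hC2.mono hsub) hroot hm
    (hm' αk1 (hsub (left_mem_Icc.2 hαk1.2))) fun ξ hξ => hσ ξ (hsub hξ)
  have hσ0 : 0 ≤ σ := (abs_nonneg _).trans (hσ αstar (hsub (right_mem_Icc.2 hαk1.2)))
  calc αk2 - αstar ≤ αk1 - g αk1 / deriv g αk1 - αstar := by
        rw [hstep]; linarith [min_le_left (αk1 - g αk1 / deriv g αk1) (αk - g αk / deriv g αk)]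
    _ ≤ σ / (2 * m) * (αk1 - αstar) ^ 2 := hnewton
    _ ≤ σ / m * (αk1 - αstar) ^ 2 := by gcongr; linarith

/-- Quadratic convergence of the two-tangent recovery step.
If g is C² and convex on [a,b] with root α* ∈ (a,b), derivative bounded below by
m > 0, α_{k+1} ∈ [a,α*], α_k ∈ [a,b], and the iterate
α_{k+2} = min(α_{k+1} - g(α_{k+1})/g'(α_{k+1}), α_k - g(α_k)/g'(α_k)) satisfies
α_{k+2} ≥ α*, then α_{k+2} - α* ≤ (σ/m)·(α_{k+1} - α*)². -/
theorem stmt_17 (g : ℝ → ℝ) (a b αstar : ℝ)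
    (hab : a < b) (hstar : αstar ∈ Set.Ioo a b)
    (hC2 : ContDiffOn ℝ 2 g (Set.Icc a b))
    (hconv : ConvexOn ℝ (Set.Icc a b) g)
    (hmono : StrictMonoOn g (Set.Icc a b))
    (hroot : g αstar = 0)
    (m : ℝ) (hm : 0 < m)
    (hm' : ∀ t ∈ Set.Icc a b, m ≤ deriv g t)
    (σ : ℝ) (hσ : ∀ ξ ∈ Set.Icc a b, |deriv (deriv g) ξ| ≤ σ)
    (αk αk1 : ℝ)
    (hαk : αk ∈ Set.Icc a b)
    (hαk1 : αk1 ∈ Set.Icc a αstar)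
    (αk2 : ℝ)
    (hstep : αk2 = min (αk1 - g αk1 / deriv g αk1) (αk - g αk / deriv g αk))
    (hup : αstar ≤ αk2) :
    αk2 - αstar ≤ σ / m * (αk1 - αstar) ^ 2 :=
  stmt_17_general g a b αstar hstar hC2 hroot m hm hm' σ hσ αk αk1 hαk1 αk2 hstep
end
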